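/- arXiv:1601.01376 — 3 statements merged into one kernel-verified Lean document; each statement's English description precedes it below -/
import Mathlib

section
/- For any fixed z > 0, the function h(M,K) = K(1 - exp(-z(M-K)/K)) is jointly concave on the domain {(M,K) : 0 < K, K < M}, i.e., its Hessian ( z²/K · e^{-zM/K+z} ) · [[-1, M/K],[M/K, -M²/K²]] is negative semidefinite. -/
open Real Set Matrix

/-! The substitution `t = M / K` writes `h(M, K) = K · g(M / K)` with `g t = 1 - exp(-z (t - 1))`,
the perspective of a concave function, hence concave. The Hessian is `(z² / K) e^{z - zM/K}` times
`-v vᵀ` for `v = (1, -M/K)`, hence negative semidefinite. -/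

theorem ConcaveOn.perspective {E : Type*} [AddCommGroup E] [Module ℝ E] {s : Set E} {g : E → ℝ}
    (hg : ConcaveOn ℝ s g) :
    ConcaveOn ℝ {p : E × ℝ | 0 < p.2 ∧ p.2⁻¹ • p.1 ∈ s} (fun p => p.2 * g (p.2⁻¹ • p.1)) := by
  have key : ∀ ⦃p : E × ℝ⦄, 0 < p.2 ∧ p.2⁻¹ • p.1 ∈ s → ∀ ⦃q : E × ℝ⦄, 0 < q.2 ∧ q.2⁻¹ • q.1 ∈ s →
      ∀ ⦃a b : ℝ⦄, 0 ≤ a → 0 ≤ b → a + b = 1 →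
      0 < a * p.2 + b * q.2 ∧ (a * p.2 + b * q.2)⁻¹ • (a • p.1 + b • q.1) ∈ s ∧
      a * (p.2 * g (p.2⁻¹ • p.1)) + b * (q.2 * g (q.2⁻¹ • q.1)) ≤
        (a * p.2 + b * q.2) * g ((a * p.2 + b * q.2)⁻¹ • (a • p.1 + b • q.1)) := by
    rintro ⟨x₁, t₁⟩ ⟨ht₁, hx₁⟩ ⟨x₂, t₂⟩ ⟨ht₂, hx₂⟩ a b ha hb hab
    dsimp only at *
    set t := a * t₁ + b * t₂
    have ht : 0 < t := convex_Ioi (0 : ℝ) ht₁ ht₂ ha hb hab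
    have ha' : 0 ≤ a * t₁ / t := by positivity
    have hb' : 0 ≤ b * t₂ / t := by positivity
    have hab' : a * t₁ / t + b * t₂ / t = 1 := by rw [← add_div, div_self ht.ne']
    have hpoint : t⁻¹ • (a • x₁ + b • x₂) =
        (a * t₁ / t) • (t₁⁻¹ • x₁) + (b * t₂ / t) • (t₂⁻¹ • x₂) := by
      rw [smul_smul, smul_smul, smul_add, smul_smul, smul_smul]
      congr 2 <;> field_simp
    refine ⟨ht, hpoint ▸ hg.1 hx₁ hx₂ ha' hb' hab', ?_⟩
    calc a * (t₁ * g (t₁⁻¹ • x₁)) + b * (t₂ * g (t₂⁻¹ • x₂))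
        = t * ((a * t₁ / t) * g (t₁⁻¹ • x₁) + (b * t₂ / t) * g (t₂⁻¹ • x₂)) := by
          field_simp
      _ ≤ t * g (t⁻¹ • (a • x₁ + b • x₂)) := by
          rw [hpoint]
          exact mul_le_mul_of_nonneg_left (hg.2 hx₁ hx₂ ha' hb' hab') ht.le
  refine ⟨fun p hp q hq a b ha hb hab => ?_, fun p hp q hq a b ha hb hab => ?_⟩
  · obtain ⟨ht, hs, -⟩ := key hp hq ha hb hab
    exact ⟨ht, hs⟩
  · simpa using (key hp hq ha hb hab).2.2

theorem concaveOn_one_sub_exp_mul_sub (z c : ℝ) :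
    ConcaveOn ℝ univ (fun t => 1 - exp (-z * (t - c))) := by
  have h := (convexOn_exp.comp_affineMap
    ((LinearMap.mul ℝ ℝ (-z)).toAffineMap + AffineMap.const ℝ ℝ (z * c))).neg.add_const 1
  refine h.congr fun t _ => ?_
  simp only [AffineMap.coe_add, LinearMap.coe_toAffineMap, AffineMap.coe_const, Pi.add_apply,
    Pi.neg_apply, Function.comp_apply, LinearMap.mul_apply_apply, Function.const_apply]
  ring_nf

theorem Matrix.posSemidef_neg_smul_of_nonneg {c : ℝ} (hc : 0 ≤ c) (r : ℝ) :
    (-(c • !![(-1 : ℝ), r; r, -r ^ 2])).PosSemidef := by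
  have h : -(c • !![(-1 : ℝ), r; r, -r ^ 2]) = c • vecMulVec ![1, -r] (star ![1, -r]) := by
    ext i j
    fin_cases i <;> fin_cases j <;> simp [sq]
  rw [h]
  exact (posSemidef_vecMulVec_self_star _).smul hc

theorem stmt_2_general (z : ℝ) :
    ConcaveOn ℝ {p : ℝ × ℝ | 0 < p.2 ∧ p.2 < p.1}
      (fun p : ℝ × ℝ => p.2 * (1 - Real.exp (-z * (p.1 - p.2) / p.2))) ∧
    ∀ M K : ℝ, 0 < K → K < M →
      (-((z ^ 2 / K * Real.exp (-z * M / K + z)) •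
          !![(-1 : ℝ), M / K; M / K, -(M ^ 2 / K ^ 2)])).PosSemidef := by
  constructor
  · have hdom : {p : ℝ × ℝ | 0 < p.2 ∧ p.2 < p.1} = {p | 0 < p.2 ∧ p.2⁻¹ • p.1 ∈ Ioi 1} := by
      ext ⟨M, K⟩
      simp only [mem_ofPred_eq, mem_Ioi, smul_eq_mul]
      exact and_congr_right fun hK => by rw [inv_mul_eq_div, one_lt_div hK]
    rw [hdom]
    refine ((concaveOn_one_sub_exp_mul_sub z 1).subset (subset_univ _) (convex_Ioi 1)).perspective
      |>.congr fun p hp => ?_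
    simp only [smul_eq_mul, inv_mul_eq_div]
    congr 3
    field_simp [hp.1.ne']
  · intro M K hK _
    rw [← div_pow]
    exact posSemidef_neg_smul_of_nonneg (by positivity) (M / K)

/-- For any fixed `z > 0`, the function `h(M,K) = K*(1 - exp(-z*(M-K)/K))`
is jointly concave on the domain `{(M,K) : 0 < K < M}`, and its Hessian
is the negative semidefinite matrix
`(z²/K)·exp(-zM/K+z)·[[-1, M/K],[M/K, -M²/K²]]`. -/
theorem stmt_2 (z : ℝ) (hz : 0 < z) :
    ConcaveOn ℝ {p : ℝ × ℝ | 0 < p.2 ∧ p.2 < p.1}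
      (fun p : ℝ × ℝ => p.2 * (1 - Real.exp (-z * (p.1 - p.2) / p.2))) ∧
    ∀ M K : ℝ, 0 < K → K < M →
      (-((z ^ 2 / K * Real.exp (-z * M / K + z)) •
          !![(-1 : ℝ), M / K; M / K, -(M ^ 2 / K ^ 2)])).PosSemidef :=
  stmt_2_general z
end

section
/- Let f : (0,∞) → ℝ be strictly concave and differentiable with unique maximizer K* > 0, f > 0 on (0,K*], and D(K) = c₀ + K³P_pre with c₀, P_pre > 0. Define F(K) = f'(K)·D(K) - f(K)·3K²P_pre. Then F is strictly decreasing on (0, K*), F(0⁺) > 0 (since f'(0⁺) > 0), F(K*) < 0, and F has a unique zero in (0, K*). -/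
/-!
`F = f' D - f D'` is the numerator of `(f / D)'`, and `F' = f'' D - f D''`: the `f' D'` terms
cancel. With `f'' < 0`, `f > 0`, `D > 0` and `D'' = 6 K P_pre ≥ 0`, `F` is strictly decreasing.
At `0` we have `D'(0) = 0` and `f'(0) > f'(K*) = 0`, so `F(0) = f'(0) c₀ > 0`, while
`F(K*) = -f(K*) D'(K*) < 0`; the intermediate value theorem and strict monotonicity give the
unique zero.
-/

open Real Set Filter Topology

theorem hasDerivAt_deriv_mul_sub_mul {f g g' : ℝ → ℝ} {f'' g'' x : ℝ}
    (hf : DifferentiableAt ℝ f x) (hf' : HasDerivAt (deriv f) f'' x)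
    (hg : HasDerivAt g (g' x) x) (hg' : HasDerivAt g' g'' x) :
    HasDerivAt (fun y => deriv f y * g y - g' y * f y) (f'' * g x - g'' * f x) x :=
  ((hf'.mul hg).sub (hg'.mul hf.hasDerivAt)).congr_deriv (by ring)

theorem strictAntiOn_deriv_mul_sub_mul {f g g' g'' : ℝ → ℝ} {a b : ℝ}
    (hf : Differentiable ℝ f) (hf' : Differentiable ℝ (deriv f))
    (hg : ∀ x, HasDerivAt g (g' x) x) (hg' : ∀ x, HasDerivAt g' (g'' x) x)
    (hf'' : ∀ x ∈ Ioo a b, deriv (deriv f) x < 0) (hf_pos : ∀ x ∈ Ioo a b, 0 < f x)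
    (hg_pos : ∀ x ∈ Ioo a b, 0 < g x) (hg'' : ∀ x ∈ Ioo a b, 0 ≤ g'' x) :
    StrictAntiOn (fun x => deriv f x * g x - g' x * f x) (Icc a b) := by
  have hW : ∀ x, HasDerivAt (fun y => deriv f y * g y - g' y * f y)
      (deriv (deriv f) x * g x - g'' x * f x) x := fun x =>
    hasDerivAt_deriv_mul_sub_mul (hf x) (hf' x).hasDerivAt (hg x) (hg' x)
  refine strictAntiOn_of_deriv_neg (convex_Icc a b)
    (fun x _ => (hW x).continuousAt.continuousWithinAt) fun x hx => ?_
  rw [interior_Icc] at hx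
  rw [(hW x).deriv]
  have := mul_neg_of_neg_of_pos (hf'' x hx) (hg_pos x hx)
  have := mul_nonneg (hg'' x hx) (hf_pos x hx).le
  linarith

theorem StrictAntiOn.existsUnique_mem_Ioo_eq_zero {W : ℝ → ℝ} {a b : ℝ}
    (hanti : StrictAntiOn W (Icc a b)) (hab : a ≤ b) (hW : ContinuousOn W (Icc a b))
    (ha : 0 < W a) (hb : W b < 0) : ∃! x, x ∈ Ioo a b ∧ W x = 0 := by
  obtain ⟨c, hc, hWc⟩ := intermediate_value_Ioo' hab hW ⟨hb, ha⟩
  exact ⟨c, ⟨hc, hWc⟩, fun y hy =>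
    hanti.injOn (Ioo_subset_Icc_self hy.1) (Ioo_subset_Icc_self hc) (hy.2.trans hWc.symm)⟩

theorem deriv_mul_sub_mul_singleCrossing {f g g' g'' : ℝ → ℝ} {a b : ℝ} (hab : a < b)
    (hf : Differentiable ℝ f) (hf' : Differentiable ℝ (deriv f))
    (hg : ∀ x, HasDerivAt g (g' x) x) (hg' : ∀ x, HasDerivAt g' (g'' x) x)
    (hf'' : ∀ x ∈ Ioo a b, deriv (deriv f) x < 0) (hf'b : deriv f b = 0)
    (hf_pos : ∀ x ∈ Ioc a b, 0 < f x) (hg_pos : ∀ x ∈ Icc a b, 0 < g x)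
    (hg'a : g' a = 0) (hg'b : 0 < g' b) (hg'' : ∀ x ∈ Ioo a b, 0 ≤ g'' x) :
    StrictAntiOn (fun x => deriv f x * g x - g' x * f x) (Ioo a b) ∧
    (∀ᶠ x in 𝓝[>] a, 0 < deriv f x * g x - g' x * f x) ∧
    deriv f b * g b - g' b * f b < 0 ∧
    ∃! x, x ∈ Ioo a b ∧ deriv f x * g x - g' x * f x = 0 := by
  have hanti := strictAntiOn_deriv_mul_sub_mul hf hf' hg hg' hf''
    (fun x hx => hf_pos x (Ioo_subset_Ioc_self hx)) (fun x hx => hg_pos x (Ioo_subset_Icc_self hx))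
    hg''
  have hcont : Continuous fun x => deriv f x * g x - g' x * f x :=
    (hf'.continuous.mul (continuous_iff_continuousAt.2 fun x => (hg x).continuousAt)).sub
      ((continuous_iff_continuousAt.2 fun x => (hg' x).continuousAt).mul hf.continuous)
  have hf'a : 0 < deriv f a := by
    have hf'anti : StrictAntiOn (deriv f) (Icc a b) :=
      strictAntiOn_of_deriv_neg (convex_Icc a b) hf'.continuous.continuousOn
        (by rwa [interior_Icc])
    simpa [hf'b] using hf'anti (left_mem_Icc.2 hab.le) (right_mem_Icc.2 hab.le) hab
  have hWa : 0 < deriv f a * g a - g' a * f a := by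
    simpa [hg'a] using mul_pos hf'a (hg_pos a (left_mem_Icc.2 hab.le))
  have hWb : deriv f b * g b - g' b * f b < 0 := by
    simpa [hf'b] using mul_pos hg'b (hf_pos b (right_mem_Ioc.2 hab))
  exact ⟨hanti.mono Ioo_subset_Icc_self,
    (hcont.continuousAt.eventually (lt_mem_nhds hWa)).filter_mono nhdsWithin_le_nhds, hWb,
    hanti.existsUnique_mem_Ioo_eq_zero hab.le hcont.continuousOn hWa hWb⟩

theorem stmt_14_general (f : ℝ → ℝ) (Kstar c₀ Ppre : ℝ)
    (hKstar : 0 < Kstar) (hc₀ : 0 < c₀) (hPpre : 0 < Ppre)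
    (hf : ContDiff ℝ 2 f)
    (hconc : ∀ K ∈ Set.Ioi (0 : ℝ), deriv (deriv f) K < 0)
    (hderivKstar : deriv f Kstar = 0)
    (hpos : ∀ K ∈ Set.Ioc (0 : ℝ) Kstar, 0 < f K) :
    StrictAntiOn
        (fun K => deriv f K * (c₀ + K ^ 3 * Ppre) - 3 * K ^ 2 * Ppre * f K)
        (Set.Ioo (0 : ℝ) Kstar) ∧
    (∀ᶠ K in nhdsWithin (0 : ℝ) (Set.Ioi 0),
        0 < deriv f K * (c₀ + K ^ 3 * Ppre) - 3 * K ^ 2 * Ppre * f K) ∧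
    deriv f Kstar * (c₀ + Kstar ^ 3 * Ppre) - 3 * Kstar ^ 2 * Ppre * f Kstar < 0 ∧
    (∃! K : ℝ, K ∈ Set.Ioo (0 : ℝ) Kstar ∧
        deriv f K * (c₀ + K ^ 3 * Ppre) - 3 * K ^ 2 * Ppre * f K = 0) := by
  have hD : ∀ K : ℝ, HasDerivAt (fun K => c₀ + K ^ 3 * Ppre) (3 * K ^ 2 * Ppre) K := fun K => by
    simpa using ((hasDerivAt_pow 3 K).mul_const Ppre).const_add c₀
  have hD' : ∀ K : ℝ, HasDerivAt (fun K => 3 * K ^ 2 * Ppre) (6 * K * Ppre) K := fun K =>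
    (((hasDerivAt_pow 2 K).const_mul 3).mul_const Ppre).congr_deriv (by push_cast; ring)
  exact deriv_mul_sub_mul_singleCrossing hKstar (hf.differentiable two_ne_zero)
    (hf.deriv'.differentiable one_ne_zero) hD hD' (fun K hK => hconc K hK.1) hderivKstar hpos
    (fun K hK => by have := hK.1; positivity) (by simp) (by positivity)
    (fun K hK => by have := hK.1; positivity)

/-- Let `f` be `C²` and strictly concave (`f'' < 0`) on `(0,∞)` with unique
maximizer `K* > 0` (`f' > 0` on `(0,K*)`, `f'(K*) = 0`), `f > 0` on `(0,K*]`,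
and `D(K) = c₀ + K³ P_pre` with `c₀, P_pre > 0`. Then
`F(K) = f'(K) D(K) - 3K² P_pre f(K)` is strictly decreasing on `(0,K*)`,
eventually positive near `0⁺`, negative at `K*`, and has a unique zero in
`(0, K*)`. -/
theorem stmt_14 (f : ℝ → ℝ) (Kstar c₀ Ppre : ℝ)
    (hKstar : 0 < Kstar) (hc₀ : 0 < c₀) (hPpre : 0 < Ppre)
    (hf : ContDiff ℝ 2 f)
    (hconc : ∀ K ∈ Set.Ioi (0 : ℝ), deriv (deriv f) K < 0)
    (hderivpos : ∀ K ∈ Set.Ioo (0 : ℝ) Kstar, 0 < deriv f K)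
    (hderivKstar : deriv f Kstar = 0)
    (hpos : ∀ K ∈ Set.Ioc (0 : ℝ) Kstar, 0 < f K) :
    StrictAntiOn
        (fun K => deriv f K * (c₀ + K ^ 3 * Ppre) - 3 * K ^ 2 * Ppre * f K)
        (Set.Ioo (0 : ℝ) Kstar) ∧
    (∀ᶠ K in nhdsWithin (0 : ℝ) (Set.Ioi 0),
        0 < deriv f K * (c₀ + K ^ 3 * Ppre) - 3 * K ^ 2 * Ppre * f K) ∧
    deriv f Kstar * (c₀ + Kstar ^ 3 * Ppre) - 3 * Kstar ^ 2 * Ppre * f Kstar < 0 ∧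
    (∃! K : ℝ, K ∈ Set.Ioo (0 : ℝ) Kstar ∧
        deriv f K * (c₀ + K ^ 3 * Ppre) - 3 * K ^ 2 * Ppre * f K = 0) :=
  stmt_14_general f Kstar c₀ Ppre hKstar hc₀ hPpre hf hconc hderivKstar hpos
end

section
/- For α > 2, the integral ∫_{z^{-2/α}}^∞ (1 - e^{-y^{-α/2}}) dy converges and 1 + z^{2/α}∫_{z^{-2/α}}^∞(1 - e^{-y^{-α/2}})dy = e^{-z} + z^{2/α}γ(1 - 2/α, z), where γ is the lower incomplete gamma function. -/
open MeasureTheory Real Set Filter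

/-- The lower incomplete gamma function `γ(s, z) = ∫₀^z t^{s-1} e^{-t} dt`. -/
noncomputable def lowerGamma (s z : ℝ) : ℝ :=
  ∫ t in Set.Ioo (0 : ℝ) z, t ^ (s - 1) * Real.exp (-t)

/-- For `α > 2` and `z > 0`, the integral
`∫_{z^{-2/α}}^∞ (1 - e^{-y^{-α/2}}) dy` converges and
`1 + z^{2/α} ∫_{z^{-2/α}}^∞ (1 - e^{-y^{-α/2}}) dy
  = e^{-z} + z^{2/α} γ(1 - 2/α, z)`. -/
theorem stmt_16 (α z : ℝ) (hα : 2 < α) (hz : 0 < z) :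
    IntegrableOn (fun y : ℝ => 1 - Real.exp (-y ^ (-(α / 2))))
        (Set.Ioi (z ^ (-(2 / α)))) ∧
    1 + z ^ (2 / α) *
        ∫ y in Set.Ioi (z ^ (-(2 / α))), (1 - Real.exp (-y ^ (-(α / 2))))
      = Real.exp (-z) + z ^ (2 / α) * lowerGamma (1 - 2 / α) z := by
  have hα0 : (0:ℝ) < α := by linarith
  have h2α : (0:ℝ) < 2 / α := by positivity
  have h2α1 : 2 / α < 1 := by
    rw [div_lt_one hα0]; linarith
  set p : ℝ := -(2 / α) with hp_def
  set q : ℝ := -(α / 2) with hq_def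
  have hp : p < 0 := by simp [hp_def]; positivity
  have hp1 : -1 < p := by simp only [hp_def]; linarith
  have hpq : p * q = 1 := by
    rw [hp_def, hq_def, neg_mul_neg, div_mul_div_comm, mul_comm (2:ℝ) α, div_self (by positivity : α * 2 ≠ 0)]
  have ha : 0 < z ^ p := rpow_pos_of_pos hz p
  -- image
  have himg : (fun t : ℝ => t ^ p) '' Ioo 0 z = Ioi (z ^ p) := by
    ext y
    constructor
    · rintro ⟨t, ⟨ht0, htz⟩, rfl⟩
      exact rpow_lt_rpow_of_neg ht0 htz hp
    · intro hy
      have hy0 : 0 < y := lt_trans ha hy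
      refine ⟨y ^ q, ⟨rpow_pos_of_pos hy0 q, ?_⟩, ?_⟩
      · have : y ^ q < (z ^ p) ^ q := rpow_lt_rpow_of_neg ha hy (by simp [hq_def]; positivity)
        calc y ^ q < (z ^ p) ^ q := this
          _ = z ^ (p * q) := (rpow_mul hz.le p q).symm
          _ = z := by rw [hpq, rpow_one]
      · show (y ^ q) ^ p = y
        rw [← rpow_mul hy0.le, mul_comm q p, hpq, rpow_one]
  have hinj : InjOn (fun t : ℝ => t ^ p) (Ioo 0 z) :=
    (strictAntiOn_rpow_Ioi_of_exponent_neg hp).injOn.mono (fun t ht => ht.1)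
  have hderiv : ∀ t ∈ Ioo (0:ℝ) z, HasDerivWithinAt (fun t : ℝ => t ^ p)
      (p * t ^ (p - 1)) (Ioo 0 z) t := fun t ht =>
    (Real.hasDerivAt_rpow_const (Or.inl ht.1.ne')).hasDerivWithinAt
  -- integrable bound
  have hbound : ∀ c : ℝ, -1 < c → IntegrableOn (fun t : ℝ => t ^ c) (Ioo 0 z) := by
    intro c hc
    exact (intervalIntegrable_iff_integrableOn_Ioo_of_le hz.le).mp
      (intervalIntegral.intervalIntegrable_rpow' hc)
  have hexp_le : ∀ t : ℝ, 0 < t → 0 ≤ 1 - Real.exp (-t) ∧ 1 - Real.exp (-t) ≤ t := by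
    intro t ht
    constructor
    · have : Real.exp (-t) ≤ 1 := by
        rw [Real.exp_le_one_iff]; linarith
      linarith
    · have := Real.add_one_le_exp (-t)
      nlinarith [Real.exp_pos (-t)]
  -- φ integrable
  have hφcont : ContinuousOn (fun t : ℝ => 2 / α * t ^ (p - 1) * (1 - Real.exp (-t))) (Ioo 0 z) := by
    apply ContinuousOn.mul
    · apply ContinuousOn.mul continuousOn_const
      intro t ht
      exact (Real.continuousAt_rpow_const t (p-1) (Or.inl ht.1.ne')).continuousWithinAt
    · fun_prop
  have hφ : IntegrableOn (fun t : ℝ => 2 / α * t ^ (p - 1) * (1 - Real.exp (-t))) (Ioo 0 z) := by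
    apply Integrable.mono' (((hbound p hp1).const_mul (2/α)))
      (hφcont.aestronglyMeasurable measurableSet_Ioo)
    filter_upwards [ae_restrict_mem measurableSet_Ioo] with t ht
    obtain ⟨h1, h2⟩ := hexp_le t ht.1
    have htp : (0:ℝ) < t ^ (p-1) := rpow_pos_of_pos ht.1 _
    rw [Real.norm_eq_abs, abs_of_nonneg (by positivity)]
    calc 2 / α * t ^ (p - 1) * (1 - Real.exp (-t)) ≤ 2 / α * t ^ (p - 1) * t :=
          mul_le_mul_of_nonneg_left h2 (by positivity)
      _ = 2 / α * t ^ p := by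
          rw [mul_assoc, ← Real.rpow_add_one ht.1.ne' (p-1)]
          norm_num
  -- ψ integrable
  have hψcont : ContinuousOn (fun t : ℝ => t ^ p * Real.exp (-t)) (Ioo 0 z) := by
    apply ContinuousOn.mul
    · intro t ht
      exact (Real.continuousAt_rpow_const t p (Or.inl ht.1.ne')).continuousWithinAt
    · fun_prop
  have hψ : IntegrableOn (fun t : ℝ => t ^ p * Real.exp (-t)) (Ioo 0 z) := by
    apply Integrable.mono' (hbound p hp1) (hψcont.aestronglyMeasurable measurableSet_Ioo)
    filter_upwards [ae_restrict_mem measurableSet_Ioo] with t ht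
    have htp : (0:ℝ) < t ^ p := rpow_pos_of_pos ht.1 _
    have he1 : Real.exp (-t) ≤ 1 := by rw [Real.exp_le_one_iff]; linarith [ht.1]
    have he0 := Real.exp_pos (-t)
    rw [Real.norm_eq_abs, abs_of_nonneg (by positivity)]
    nlinarith
  -- change of variables
  have hchg := integral_image_eq_integral_abs_deriv_smul measurableSet_Ioo hderiv hinj
    (fun y : ℝ => 1 - Real.exp (-y ^ q))
  rw [himg] at hchg
  have hcongr : ∫ t in Ioo (0:ℝ) z, |p * t ^ (p - 1)| • (1 - Real.exp (-(t ^ p) ^ q))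
      = ∫ t in Ioo (0:ℝ) z, 2 / α * t ^ (p - 1) * (1 - Real.exp (-t)) := by
    apply setIntegral_congr_fun measurableSet_Ioo
    intro t ht
    have h1 : (t ^ p) ^ q = t := by
      rw [← rpow_mul ht.1.le, hpq, rpow_one]
    have h2 : |p * t ^ (p - 1)| = 2 / α * t ^ (p - 1) := by
      rw [abs_mul, abs_of_neg hp, abs_of_pos (rpow_pos_of_pos ht.1 _)]
      simp [hp_def]
    simp only [h1, h2, smul_eq_mul]
  -- integrability of the original integral
  have hint : IntegrableOn (fun y : ℝ => 1 - Real.exp (-y ^ (-(α / 2)))) (Ioi (z ^ (-(2 / α)))) := by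
    rw [show (-(2/α) : ℝ) = p from rfl, show (-(α/2) : ℝ) = q from rfl, ← himg]
    rw [integrableOn_image_iff_integrableOn_abs_deriv_smul measurableSet_Ioo hderiv hinj]
    apply hφ.congr
    filter_upwards [ae_restrict_mem measurableSet_Ioo] with t ht
    have h1 : (t ^ p) ^ q = t := by
      rw [← rpow_mul ht.1.le, hpq, rpow_one]
    have h2 : |p * t ^ (p - 1)| = 2 / α * t ^ (p - 1) := by
      rw [abs_mul, abs_of_neg hp, abs_of_pos (rpow_pos_of_pos ht.1 _)]
      simp [hp_def]
    simp only [h1, h2, smul_eq_mul]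
  refine ⟨hint, ?_⟩
  -- FTC for h t = t^p * (exp(-t) - 1)
  have hFTC : ∫ t in (0:ℝ)..z, (2 / α * t ^ (p - 1) * (1 - Real.exp (-t))
      - t ^ p * Real.exp (-t)) = z ^ p * (Real.exp (-z) - 1) - 0 := by
    apply intervalIntegral.integral_eq_sub_of_hasDerivAt_of_tendsto hz
    · intro t ht
      have hd1 : HasDerivAt (fun t : ℝ => t ^ p) (p * t ^ (p-1)) t :=
        Real.hasDerivAt_rpow_const (Or.inl ht.1.ne')
      have hd2 : HasDerivAt (fun t : ℝ => Real.exp (-t) - 1) (-Real.exp (-t)) t := by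
        have := ((Real.hasDerivAt_exp (-t)).comp t ((hasDerivAt_id t).neg)).sub_const 1
        simpa using this
      have := hd1.mul hd2
      convert this using 1
      rfl
      have hps : -p = 2 / α := by simp [hp_def]
      rw [← hps]; ring
    · rw [intervalIntegrable_iff_integrableOn_Ioo_of_le hz.le]
      exact hφ.sub hψ
    · -- tendsto at 0+
      have hb : Filter.Tendsto (fun t : ℝ => t ^ (p + 1)) (nhdsWithin 0 (Ioi 0)) (nhds 0) := by
        have hc : ContinuousAt (fun t : ℝ => t ^ (p+1)) 0 :=
          Real.continuousAt_rpow_const 0 (p+1) (Or.inr (by linarith))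
        have h0 : (0:ℝ) ^ (p+1) = 0 := Real.zero_rpow (ne_of_gt (by linarith : (0:ℝ) < p + 1))
        have := hc.tendsto.mono_left (nhdsWithin_le_nhds (s := Ioi (0:ℝ)))
        rwa [h0] at this
      apply squeeze_zero_norm' ?_ hb
      filter_upwards [self_mem_nhdsWithin] with t (ht : 0 < t)
      obtain ⟨h1, h2⟩ := hexp_le t ht
      have htp : (0:ℝ) < t ^ p := rpow_pos_of_pos ht _
      simp only [Pi.mul_apply]
      rw [Real.norm_eq_abs, abs_mul, abs_of_pos htp, abs_sub_comm, abs_of_nonneg h1]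
      calc t ^ p * (1 - Real.exp (-t)) ≤ t ^ p * t :=
            mul_le_mul_of_nonneg_left h2 htp.le
        _ = t ^ (p + 1) := (Real.rpow_add_one ht.ne' p).symm
    · -- tendsto at z-
      have hc : ContinuousAt (fun t : ℝ => t ^ p * (Real.exp (-t) - 1)) z := by
        apply ContinuousAt.mul
        · exact Real.continuousAt_rpow_const z p (Or.inl hz.ne')
        · fun_prop
      exact hc.tendsto.mono_left nhdsWithin_le_nhds
  rw [intervalIntegral.integral_of_le hz.le, integral_Ioc_eq_integral_Ioo,
    integral_sub hφ hψ, sub_zero] at hFTC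
  have hγ : ∫ t in Ioo (0:ℝ) z, t ^ p * Real.exp (-t) = lowerGamma (1 - 2/α) z := by
    unfold lowerGamma
    apply setIntegral_congr_fun measurableSet_Ioo
    intro t ht
    have he : (1 - 2/α) - 1 = p := by rw [hp_def]; ring
    rw [he]
  have hI : ∫ y in Ioi (z ^ p), (1 - Real.exp (-y ^ q))
      = z ^ p * (Real.exp (-z) - 1) + lowerGamma (1 - 2/α) z := by
    rw [hchg, hcongr]
    rw [← hγ]
    linarith [hFTC]
  rw [hI]
  have hzz : z ^ (2/α) * z ^ p = 1 := by
    rw [← Real.rpow_add hz]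
    simp [hp_def]
  linear_combination (Real.exp (-z) - 1) * hzz
end
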